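/- arXiv:1610.05547 — 2 statements merged into one kernel-verified Lean document; each statement's English description precedes it below -/
import Mathlib

section
/- Let T : X → X be a continuous map on a compact metric space preserving an ergodic Borel probability measure μ, and assume that Birkhoff sums of continuous functions have exponential large deviations. Let M : X → GL(d,ℝ) be continuous and suppose all its Lyapunov exponents coincide: there is λ ∈ ℝ such that for μ-almost every x, (1/n) log‖M^n(x)‖ → λ and (1/n) log‖(M^n(x))^{−1}‖ → −λ as n → ∞. Then M has exponential large deviations for all exponents: for every 1 ≤ i ≤ d and every ε > 0 there exists C > 0 such that for all n ≥ 0, μ{x : |log‖Λ^i M^n(x)‖ − n·iλ| ≥ nε} ≤ C e^{−n/C}. -/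
open MeasureTheory Filter Real Set

/-- The norm of the `i`-th exterior power of a linear map between real inner product
spaces: the supremum of the Gram determinants `√det(⟪f vⱼ, f vₖ⟫)` over orthonormal
families `v : Fin i → E`. -/
noncomputable def extNorm {E F : Type*} [NormedAddCommGroup E] [InnerProductSpace ℝ E]
    [NormedAddCommGroup F] [InnerProductSpace ℝ F] (i : ℕ) (f : E →ₗ[ℝ] F) : ℝ :=
  sSup ((fun v : Fin i → E =>
      Real.sqrt (Matrix.det (Matrix.of fun j k : Fin i => (inner ℝ (f (v j)) (f (v k)) : ℝ)))) ''
    {v | Orthonormal ℝ v})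

/-- `‖Λ^i A‖` for a square matrix `A`, via the Euclidean structure on `ℝ^d`. -/
noncomputable def matExtNorm {d : ℕ} (i : ℕ) (A : Matrix (Fin d) (Fin d) ℝ) : ℝ :=
  extNorm i (Matrix.toEuclideanLin A)

/-- Operator norm of a matrix, for the Euclidean norms. -/
noncomputable def opNorm {m n : Type*} [Fintype m] [Fintype n] [DecidableEq n]
    (A : Matrix m n ℝ) : ℝ :=
  ‖LinearMap.toContinuousLinearMap (Matrix.toEuclideanLin A)‖

/-- The matrix cocycle `M^n(x) = M(T^{n-1}x) ⋯ M(x)`. -/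
def cocycle {X ι : Type*} [Fintype ι] [DecidableEq ι] (T : X → X) (M : X → Matrix ι ι ℝ) :
    ℕ → X → Matrix ι ι ℝ
  | 0, _ => 1
  | n + 1, x => cocycle T M n (T x) * M x

/-! ### Auxiliary lemmas -/

open scoped Matrix

section LinearAlgebra

lemma eeld_det_bounds_of_quadform {i : ℕ} (G : Matrix (Fin i) (Fin i) ℝ) (hG : G.IsHermitian)
    {c C : ℝ} (hc : 0 ≤ c)
    (h : ∀ y : Fin i → ℝ, c * (y ⬝ᵥ y) ≤ (G *ᵥ y) ⬝ᵥ y ∧ (G *ᵥ y) ⬝ᵥ y ≤ C * (y ⬝ᵥ y)) :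
    c ^ i ≤ G.det ∧ G.det ≤ C ^ i := by
  have hdet : G.det = ∏ j, hG.eigenvalues j := by
    rw [hG.det_eq_prod_eigenvalues]; rfl
  have key : ∀ j, c ≤ hG.eigenvalues j ∧ hG.eigenvalues j ≤ C := by
    intro j
    set v : Fin i → ℝ := (WithLp.equiv 2 _) (hG.eigenvectorBasis j) with hv
    have hmv : G *ᵥ v = hG.eigenvalues j • v := hG.mulVec_eigenvectorBasis j
    have hvv : v ⬝ᵥ v = 1 := by
      have h1 : ‖hG.eigenvectorBasis j‖ = 1 := hG.eigenvectorBasis.orthonormal.1 j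
      have h2 : (inner ℝ (hG.eigenvectorBasis j) (hG.eigenvectorBasis j) : ℝ) = 1 := by
        rw [real_inner_self_eq_norm_sq, h1]; norm_num
      rw [← h2]
      simp [EuclideanSpace.inner_eq_star_dotProduct, hv, dotProduct_comm]
      have h3 := h2
      rw [EuclideanSpace.inner_eq_star_dotProduct] at h3
      simpa [dotProduct_comm] using h3
    have hq := h v
    rw [hmv, smul_dotProduct, hvv] at hq
    simpa using hq
  constructor
  · rw [hdet]
    calc c ^ i = ∏ _j : Fin i, c := by simp
    _ ≤ ∏ j, hG.eigenvalues j :=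
        Finset.prod_le_prod (fun _ _ => hc) (fun j _ => (key j).1)
  · rw [hdet]
    calc (∏ j, hG.eigenvalues j) ≤ ∏ _j : Fin i, C :=
        Finset.prod_le_prod (fun j _ => le_trans hc (key j).1) (fun j _ => (key j).2)
    _ = C ^ i := by simp

lemma eeld_gram_quadform {E F : Type*} [NormedAddCommGroup E] [InnerProductSpace ℝ E]
    [NormedAddCommGroup F] [InnerProductSpace ℝ F] {i : ℕ} (f : E →ₗ[ℝ] F)
    (v : Fin i → E) (y : Fin i → ℝ) :
    ((Matrix.of fun j k : Fin i => (inner ℝ (f (v j)) (f (v k)) : ℝ)) *ᵥ y) ⬝ᵥ y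
      = ‖f (∑ j, y j • v j)‖ ^ 2 := by
  have : f (∑ j, y j • v j) = ∑ j, y j • f (v j) := by
    simp [map_sum, _root_.map_smul]
  rw [this, ← real_inner_self_eq_norm_sq]
  rw [inner_sum]
  simp only [sum_inner, real_inner_smul_left, real_inner_smul_right]
  simp only [dotProduct, Matrix.mulVec, dotProduct, Matrix.of_apply]
  rw [Finset.sum_comm]
  congr 1; ext j
  rw [Finset.sum_mul]
  congr 1; ext k
  ring

variable {d : ℕ}

lemma eeld_opNorm_eq (A : Matrix (Fin d) (Fin d) ℝ) :
    opNorm A = ‖Matrix.toEuclideanCLM (𝕜 := ℝ) (n := Fin d) A‖ := rfl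

lemma eeld_opNorm_mul_le (A B : Matrix (Fin d) (Fin d) ℝ) :
    opNorm (A * B) ≤ opNorm A * opNorm B := by
  rw [eeld_opNorm_eq, eeld_opNorm_eq, eeld_opNorm_eq, map_mul]; exact norm_mul_le _ _

lemma eeld_opNorm_one (hd : 1 ≤ d) : opNorm (1 : Matrix (Fin d) (Fin d) ℝ) = 1 := by
  have : Nonempty (Fin d) := ⟨⟨0, hd⟩⟩
  rw [eeld_opNorm_eq, map_one]; exact norm_one

lemma eeld_opNorm_pos (A : Matrix (Fin d) (Fin d) ℝ) (h : IsUnit A) (hd : 1 ≤ d) :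
    0 < opNorm A := by
  have : Nonempty (Fin d) := ⟨⟨0, hd⟩⟩
  have hA : A ≠ 0 := by rintro rfl; exact not_isUnit_zero h
  have hne : Matrix.toEuclideanCLM (𝕜 := ℝ) (n := Fin d) A ≠ 0 :=
    (map_ne_zero_iff _ (Matrix.toEuclideanCLM (𝕜 := ℝ) (n := Fin d)).injective).2 hA
  rw [eeld_opNorm_eq]; exact norm_pos_iff.2 hne

lemma eeld_norm_apply_le (A : Matrix (Fin d) (Fin d) ℝ) (w : EuclideanSpace ℝ (Fin d)) :
    ‖Matrix.toEuclideanLin A w‖ ≤ opNorm A * ‖w‖ := by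
  have : Matrix.toEuclideanLin A w = Matrix.toEuclideanCLM (𝕜 := ℝ) (n := Fin d) A w := rfl
  rw [this, eeld_opNorm_eq]
  exact (Matrix.toEuclideanCLM (𝕜 := ℝ) (n := Fin d) A).le_opNorm w

lemma eeld_inv_apply_apply (A : Matrix (Fin d) (Fin d) ℝ) (hA : IsUnit A)
    (w : EuclideanSpace ℝ (Fin d)) :
    Matrix.toEuclideanLin A⁻¹ (Matrix.toEuclideanLin A w) = w := by
  have h1 : Matrix.toEuclideanLin A w = Matrix.toEuclideanCLM (𝕜 := ℝ) (n := Fin d) A w := rfl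
  have h2 : ∀ u, Matrix.toEuclideanLin A⁻¹ u
      = Matrix.toEuclideanCLM (𝕜 := ℝ) (n := Fin d) A⁻¹ u := fun _ => rfl
  rw [h1, h2, ← ContinuousLinearMap.comp_apply, ← ContinuousLinearMap.mul_def, ← map_mul,
    Matrix.nonsing_inv_mul A ((Matrix.isUnit_iff_isUnit_det A).1 hA), map_one]
  rfl

lemma eeld_matExtNorm_bounds {i : ℕ} (hi1 : 1 ≤ i) (hid : i ≤ d)
    (A : Matrix (Fin d) (Fin d) ℝ) (hA : IsUnit A) :
    (opNorm A⁻¹)⁻¹ ^ i ≤ matExtNorm i A ∧ matExtNorm i A ≤ opNorm A ^ i := by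
  have hd : 1 ≤ d := le_trans hi1 hid
  have hAinv : IsUnit A⁻¹ := by
    rw [Matrix.isUnit_nonsing_inv_iff]; exact hA
  have hbpos : 0 < opNorm A := eeld_opNorm_pos A hA hd
  have hinvpos : 0 < opNorm A⁻¹ := eeld_opNorm_pos A⁻¹ hAinv hd
  have hapos : 0 < (opNorm A⁻¹)⁻¹ := inv_pos.2 hinvpos
  set a := (opNorm A⁻¹)⁻¹
  set b := opNorm A
  set f := Matrix.toEuclideanLin A
  have point : ∀ v : Fin i → EuclideanSpace ℝ (Fin d), Orthonormal ℝ v →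
      a ^ i ≤ Real.sqrt (Matrix.det (Matrix.of fun j k : Fin i => (inner ℝ (f (v j)) (f (v k)) : ℝ)))
      ∧ Real.sqrt (Matrix.det (Matrix.of fun j k : Fin i => (inner ℝ (f (v j)) (f (v k)) : ℝ)))
        ≤ b ^ i := by
    intro v hv
    set G : Matrix (Fin i) (Fin i) ℝ := Matrix.of fun j k => (inner ℝ (f (v j)) (f (v k)) : ℝ)
      with hGdef
    have hG : G.IsHermitian := by
      refine Matrix.IsHermitian.ext fun j k => ?_
      simp only [hGdef, Matrix.conjTranspose_apply, Matrix.of_apply, starRingEnd_apply,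
        star_trivial]
      exact real_inner_comm _ _
    have hquad : ∀ y : Fin i → ℝ,
        a ^ 2 * (y ⬝ᵥ y) ≤ (G *ᵥ y) ⬝ᵥ y ∧ (G *ᵥ y) ⬝ᵥ y ≤ b ^ 2 * (y ⬝ᵥ y) := by
      intro y
      have hq : (G *ᵥ y) ⬝ᵥ y = ‖f (∑ j, y j • v j)‖ ^ 2 := eeld_gram_quadform f v y
      set w := ∑ j, y j • v j with hw
      have hnw : ‖w‖ ^ 2 = y ⬝ᵥ y := by
        have := eeld_gram_quadform (LinearMap.id (R := ℝ) (M := EuclideanSpace ℝ (Fin d))) v y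
        simp only [LinearMap.id_apply] at this
        have hone : (Matrix.of fun j k : Fin i => (inner ℝ (v j) (v k) : ℝ)) = 1 := by
          ext j k
          by_cases h : j = k <;>
            simp [h, orthonormal_iff_ite.1 hv, Matrix.one_apply]
        rw [hone] at this
        rw [← this, Matrix.one_mulVec]
      have hub : ‖f w‖ ≤ b * ‖w‖ := eeld_norm_apply_le A w
      have hlb' : a * ‖w‖ ≤ ‖f w‖ := by
        have h1 : ‖w‖ ≤ opNorm A⁻¹ * ‖f w‖ := by
          have := eeld_norm_apply_le A⁻¹ (f w)
          rwa [eeld_inv_apply_apply A hA w] at this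
        rw [show a = (opNorm A⁻¹)⁻¹ from rfl, inv_mul_le_iff₀ hinvpos]
        exact h1
      constructor
      · rw [hq, ← hnw]
        calc a ^ 2 * ‖w‖ ^ 2 = (a * ‖w‖) ^ 2 := by ring
        _ ≤ ‖f w‖ ^ 2 := by
            apply sq_le_sq' _ hlb'
            nlinarith [norm_nonneg (f w), norm_nonneg w, hapos.le]
      · rw [hq, ← hnw]
        calc ‖f w‖ ^ 2 ≤ (b * ‖w‖) ^ 2 := by
              apply sq_le_sq' _ hub
              nlinarith [norm_nonneg (f w), norm_nonneg w, hbpos.le]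
        _ = b ^ 2 * ‖w‖ ^ 2 := by ring
    have := eeld_det_bounds_of_quadform G hG (by positivity) hquad
    constructor
    · have h1 : (a ^ i) ^ 2 ≤ G.det := by
        calc (a ^ i) ^ 2 = (a ^ 2) ^ i := by ring
        _ ≤ G.det := this.1
      calc a ^ i = Real.sqrt ((a ^ i) ^ 2) := (Real.sqrt_sq (by positivity)).symm
      _ ≤ Real.sqrt G.det := Real.sqrt_le_sqrt h1
    · have h2 : G.det ≤ (b ^ i) ^ 2 := by
        calc G.det ≤ (b ^ 2) ^ i := this.2
        _ = (b ^ i) ^ 2 := by ring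
      calc Real.sqrt G.det ≤ Real.sqrt ((b ^ i) ^ 2) := Real.sqrt_le_sqrt h2
      _ = b ^ i := Real.sqrt_sq (by positivity)
  have hne : ∃ v : Fin i → EuclideanSpace ℝ (Fin d), Orthonormal ℝ v := by
    refine ⟨(EuclideanSpace.basisFun (Fin d) ℝ) ∘ Fin.castLE hid, ?_⟩
    exact (EuclideanSpace.basisFun (Fin d) ℝ).orthonormal.comp _ (Fin.castLE_injective hid)
  obtain ⟨v₀, hv₀⟩ := hne
  set S := ((fun v : Fin i → EuclideanSpace ℝ (Fin d) =>
      Real.sqrt (Matrix.det (Matrix.of fun j k : Fin i => (inner ℝ (f (v j)) (f (v k)) : ℝ)))) ''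
    {v | Orthonormal ℝ v})
  have hSne : S.Nonempty := ⟨_, ⟨v₀, hv₀, rfl⟩⟩
  have hSbdd : BddAbove S := by
    refine ⟨b ^ i, ?_⟩
    rintro z ⟨v, hv, rfl⟩
    exact (point v hv).2
  have hrw : matExtNorm i A = sSup S := rfl
  rw [hrw]
  constructor
  · calc a ^ i ≤ Real.sqrt (Matrix.det (Matrix.of fun j k : Fin i =>
        (inner ℝ (f (v₀ j)) (f (v₀ k)) : ℝ))) := (point v₀ hv₀).1
    _ ≤ sSup S := le_csSup hSbdd ⟨v₀, hv₀, rfl⟩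
  · exact csSup_le hSne (by rintro z ⟨v, hv, rfl⟩; exact (point v hv).2)

lemma eeld_log_matExtNorm_bounds {i : ℕ} (hi1 : 1 ≤ i) (hid : i ≤ d)
    (A : Matrix (Fin d) (Fin d) ℝ) (hA : IsUnit A) :
    -(i : ℝ) * Real.log (opNorm A⁻¹) ≤ Real.log (matExtNorm i A) ∧
      Real.log (matExtNorm i A) ≤ (i : ℝ) * Real.log (opNorm A) := by
  have hd : 1 ≤ d := le_trans hi1 hid
  have hAinv : IsUnit A⁻¹ := by rw [Matrix.isUnit_nonsing_inv_iff]; exact hA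
  have hinvpos : 0 < opNorm A⁻¹ := eeld_opNorm_pos A⁻¹ hAinv hd
  have hapos : 0 < (opNorm A⁻¹)⁻¹ ^ i := by positivity
  obtain ⟨h1, h2⟩ := eeld_matExtNorm_bounds hi1 hid A hA
  have he : -(i : ℝ) * Real.log (opNorm A⁻¹) = Real.log (((opNorm A⁻¹)⁻¹) ^ i) := by
    rw [Real.log_pow, Real.log_inv]; ring
  constructor
  · rw [he]
    exact Real.log_le_log hapos h1
  · calc Real.log (matExtNorm i A) ≤ Real.log (opNorm A ^ i) :=
      Real.log_le_log (lt_of_lt_of_le hapos h1) h2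
    _ = (i : ℝ) * Real.log (opNorm A) := Real.log_pow _ _

end LinearAlgebra

section Cocycle

variable {d : ℕ} {X : Type*} (T : X → X) (N : X → Matrix (Fin d) (Fin d) ℝ)

lemma eeld_cocycle_add (m n : ℕ) (x : X) :
    cocycle T N (m + n) x = cocycle T N m (T^[n] x) * cocycle T N n x := by
  induction n generalizing x with
  | zero => simp [cocycle]
  | succ n ih =>
    have h : m + (n + 1) = (m + n) + 1 := by omega
    rw [h]
    show cocycle T N (m + n) (T x) * N x = _
    rw [ih (T x)]
    show cocycle T N m (T^[n] (T x)) * cocycle T N n (T x) * N x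
      = cocycle T N m (T^[n+1] x) * (cocycle T N n (T x) * N x)
    rw [Function.iterate_succ_apply, mul_assoc]

lemma eeld_cocycle_isUnit (hM : ∀ x, IsUnit (N x)) (n : ℕ) (x : X) :
    IsUnit (cocycle T N n x) := by
  induction n generalizing x with
  | zero => exact isUnit_one
  | succ n ih => exact (ih (T x)).mul (hM x)

lemma eeld_cocycle_one (x : X) : cocycle T N 1 x = N x := by
  show cocycle T N 0 (T x) * N x = N x
  show (1 : Matrix (Fin d) (Fin d) ℝ) * N x = N x
  rw [one_mul]

variable [TopologicalSpace X]

lemma eeld_cocycle_continuous (hT : Continuous T) (hM : Continuous N) (n : ℕ) :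
    Continuous (fun x => cocycle T N n x) := by
  induction n with
  | zero => exact continuous_const
  | succ n ih => exact (ih.comp hT).matrix_mul hM

lemma eeld_continuous_opNorm :
    Continuous (fun A : Matrix (Fin d) (Fin d) ℝ => opNorm A) := by
  have h : Continuous (fun A : Matrix (Fin d) (Fin d) ℝ =>
      LinearMap.toContinuousLinearMap (Matrix.toEuclideanLin A)) :=
    LinearMap.continuous_of_finiteDimensional
      ((LinearMap.toContinuousLinearMap :
          (EuclideanSpace ℝ (Fin d) →ₗ[ℝ] EuclideanSpace ℝ (Fin d)) ≃ₗ[ℝ]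
            (EuclideanSpace ℝ (Fin d) →L[ℝ] EuclideanSpace ℝ (Fin d))).toLinearMap.comp
        (Matrix.toEuclideanLin :
          Matrix (Fin d) (Fin d) ℝ ≃ₗ[ℝ] _).toLinearMap)
  exact h.norm

lemma eeld_cocycle_inv_continuous (hT : Continuous T) (hM : Continuous N)
    (hMu : ∀ x, IsUnit (N x)) (n : ℕ) :
    Continuous (fun x => (cocycle T N n x)⁻¹) := by
  have hc := eeld_cocycle_continuous T N hT hM n
  have hdet : ∀ x, (cocycle T N n x).det ≠ 0 := fun x =>
    ((Matrix.isUnit_iff_isUnit_det _).1 (eeld_cocycle_isUnit T N hMu n x)).ne_zero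
  have h : (fun x => (cocycle T N n x)⁻¹)
      = fun x => ((cocycle T N n x).det)⁻¹ • (cocycle T N n x).adjugate := by
    funext x
    rw [Matrix.inv_def, Ring.inverse_eq_inv]
  rw [h]
  exact ((hc.matrix_det).inv₀ hdet).smul hc.matrix_adjugate

lemma eeld_fseq_sub (hd : 1 ≤ d) (hMu : ∀ x, IsUnit (N x)) (m n : ℕ) (x : X) :
    Real.log (opNorm (cocycle T N (m + n) x)) ≤
      Real.log (opNorm (cocycle T N m (T^[n] x))) + Real.log (opNorm (cocycle T N n x)) := by
  have hA := eeld_cocycle_isUnit T N hMu m (T^[n] x)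
  have hB := eeld_cocycle_isUnit T N hMu n x
  have hpa := eeld_opNorm_pos _ hA hd
  have hpb := eeld_opNorm_pos _ hB hd
  rw [eeld_cocycle_add]
  calc Real.log (opNorm (cocycle T N m (T^[n] x) * cocycle T N n x))
      ≤ Real.log (opNorm (cocycle T N m (T^[n] x)) * opNorm (cocycle T N n x)) :=
        Real.log_le_log (eeld_opNorm_pos _ (hA.mul hB) hd) (eeld_opNorm_mul_le _ _)
  _ = _ := Real.log_mul hpa.ne' hpb.ne'

lemma eeld_gseq_sub (hd : 1 ≤ d) (hMu : ∀ x, IsUnit (N x)) (m n : ℕ) (x : X) :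
    Real.log (opNorm (cocycle T N (m + n) x)⁻¹) ≤
      Real.log (opNorm (cocycle T N m (T^[n] x))⁻¹)
        + Real.log (opNorm (cocycle T N n x)⁻¹) := by
  have hA := eeld_cocycle_isUnit T N hMu m (T^[n] x)
  have hB := eeld_cocycle_isUnit T N hMu n x
  have hA' : IsUnit (cocycle T N m (T^[n] x))⁻¹ := by
    rw [Matrix.isUnit_nonsing_inv_iff]; exact hA
  have hB' : IsUnit (cocycle T N n x)⁻¹ := by
    rw [Matrix.isUnit_nonsing_inv_iff]; exact hB
  have hpa := eeld_opNorm_pos _ hA' hd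
  have hpb := eeld_opNorm_pos _ hB' hd
  rw [eeld_cocycle_add, Matrix.mul_inv_rev]
  calc Real.log (opNorm ((cocycle T N n x)⁻¹ * (cocycle T N m (T^[n] x))⁻¹))
      ≤ Real.log (opNorm (cocycle T N n x)⁻¹ * opNorm (cocycle T N m (T^[n] x))⁻¹) :=
        Real.log_le_log (eeld_opNorm_pos _ (hB'.mul hA') hd) (eeld_opNorm_mul_le _ _)
  _ = Real.log (opNorm (cocycle T N n x)⁻¹) + Real.log (opNorm (cocycle T N m (T^[n] x))⁻¹) :=
        Real.log_mul hpb.ne' hpa.ne'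
  _ = _ := add_comm _ _

lemma eeld_fg_nonneg (hd : 1 ≤ d) (hMu : ∀ x, IsUnit (N x)) (n : ℕ) (x : X) :
    0 ≤ Real.log (opNorm (cocycle T N n x))
        + Real.log (opNorm (cocycle T N n x)⁻¹) := by
  have hA := eeld_cocycle_isUnit T N hMu n x
  have hA' : IsUnit (cocycle T N n x)⁻¹ := by
    rw [Matrix.isUnit_nonsing_inv_iff]; exact hA
  have hpa := eeld_opNorm_pos _ hA hd
  have hpb := eeld_opNorm_pos _ hA' hd
  have h1 : (1 : ℝ) ≤ opNorm (cocycle T N n x) * opNorm (cocycle T N n x)⁻¹ := by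
    have := eeld_opNorm_mul_le (cocycle T N n x) (cocycle T N n x)⁻¹
    rw [Matrix.mul_nonsing_inv _ ((Matrix.isUnit_iff_isUnit_det _).1 hA), eeld_opNorm_one hd]
      at this
    exact this
  calc (0:ℝ) = Real.log 1 := Real.log_one.symm
  _ ≤ Real.log (opNorm (cocycle T N n x) * opNorm (cocycle T N n x)⁻¹) :=
      Real.log_le_log one_pos h1
  _ = _ := Real.log_mul hpa.ne' hpb.ne'

lemma eeld_upper_bound (u : ℕ → X → ℝ)
    (hsub1 : ∀ n x, u (n + 1) x ≤ u n (T x) + u 1 x)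
    (hzero : ∀ x, u 0 x = 0)
    {K : ℝ} (hK1 : ∀ x, u 1 x ≤ K) : ∀ n x, u n x ≤ n * K := by
  intro n
  induction n with
  | zero => intro x; rw [hzero]; simp
  | succ n ih =>
    intro x
    calc u (n + 1) x ≤ u n (T x) + u 1 x := hsub1 n x
    _ ≤ n * K + K := add_le_add (ih (T x)) (hK1 x)
    _ = (n + 1 : ℕ) * K := by push_cast; ring

end Cocycle

section Subadditive

lemma eeld_exp_bound_mono {a b : ℝ} (ha : 0 < a) (hab : a ≤ b) (n : ℕ) :
    a * Real.exp (-(n:ℝ)/a) ≤ b * Real.exp (-(n:ℝ)/b) := by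
  have hb : 0 < b := lt_of_lt_of_le ha hab
  apply mul_le_mul hab ?_ (Real.exp_pos _).le hb.le
  apply Real.exp_le_exp.2
  rw [neg_div, neg_div, neg_le_neg_iff]
  gcongr

variable {X : Type*} (T : X → X) (u : ℕ → X → ℝ)

lemma eeld_chain_bound (hsub : ∀ m n x, u (m + n) x ≤ u m (T^[n] x) + u n x)
    (k : ℕ) : ∀ (q s : ℕ) (x : X), u (q * k + s) x ≤
      (∑ m ∈ Finset.range q, u k (T^[m * k] x)) + u s (T^[q * k] x) := by
  intro q
  induction q with
  | zero => intro s x; simp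
  | succ q ih =>
    intro s x
    have h1 : (q + 1) * k + s = (q * k + s) + k := by ring
    rw [h1]
    calc u ((q * k + s) + k) x ≤ u (q * k + s) (T^[k] x) + u k x := hsub _ _ _
    _ ≤ ((∑ m ∈ Finset.range q, u k (T^[m * k] (T^[k] x))) + u s (T^[q * k] (T^[k] x))) + u k x :=
        add_le_add (ih s (T^[k] x)) le_rfl
    _ = (∑ m ∈ Finset.range (q + 1), u k (T^[m * k] x)) + u s (T^[(q + 1) * k] x) := by
        have e1 : ∀ m : ℕ, T^[m * k] (T^[k] x) = T^[(m + 1) * k] x := by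
          intro m
          rw [← Function.iterate_add_apply]
          congr 1
          ring
        have e2 : T^[q * k] (T^[k] x) = T^[(q + 1) * k] x := e1 q
        rw [Finset.sum_range_succ']
        simp only [e1, e2, zero_mul, Function.iterate_zero_apply]
        ring

lemma eeld_double_sum_eq (k n : ℕ) (hk : 1 ≤ k) (hn : k ≤ n) (x : X) :
    ∑ r ∈ Finset.range k, ∑ m ∈ Finset.range ((n - r) / k), u k (T^[m * k + r] x)
      = ∑ j ∈ Finset.range (n - k + 1), u k (T^[j] x) := by
  have hkpos : (0:ℕ) < k := hk
  rw [Finset.sum_sigma']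
  refine Finset.sum_nbij' (fun p => p.2 * k + p.1) (fun j => ⟨j % k, j / k⟩) ?_ ?_ ?_ ?_ ?_
  · rintro ⟨r, m⟩ hmem
    simp only [Finset.mem_sigma, Finset.mem_range] at hmem
    obtain ⟨hr, hm⟩ := hmem
    have h1 : m * k + k ≤ n - r := by
      rw [← Nat.succ_mul]
      exact (Nat.le_div_iff_mul_le hkpos).1 hm
    simp only [Finset.mem_range]
    omega
  · intro j hj
    simp only [Finset.mem_range] at hj
    simp only [Finset.mem_sigma, Finset.mem_range]
    refine ⟨Nat.mod_lt _ hkpos, ?_⟩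
    have h := Nat.div_add_mod' j k
    rw [Nat.lt_iff_add_one_le, Nat.le_div_iff_mul_le hkpos, Nat.succ_mul]
    have hb : j % k < k := Nat.mod_lt _ hkpos
    generalize hjk : j / k * k = t at *
    omega
  · rintro ⟨r, m⟩ hmem
    simp only [Finset.mem_sigma, Finset.mem_range] at hmem
    obtain ⟨hr, hm⟩ := hmem
    have h1 : (m * k + r) % k = r := by
      rw [mul_comm, Nat.mul_add_mod]; exact Nat.mod_eq_of_lt hr
    have h2 : (m * k + r) / k = m := by
      rw [mul_comm, Nat.mul_add_div hkpos, Nat.div_eq_of_lt hr]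
      omega
    simp [h1, h2]
  · intro j hj
    simp
    exact Nat.div_add_mod' j k
  · rintro ⟨r, m⟩ _
    rfl

lemma eeld_main_decomp (hsub : ∀ m n x, u (m + n) x ≤ u m (T^[n] x) + u n x)
    {K : ℝ} (hK0 : 0 ≤ K) (hK : ∀ n x, |u n x| ≤ n * K)
    {k n : ℕ} (hk : 1 ≤ k) (hn : k ≤ n) (x : X) :
    (k : ℝ) * u n x ≤ (∑ j ∈ Finset.range n, u k (T^[j] x)) + 3 * k ^ 2 * K := by
  have hkpos : (0:ℕ) < k := hk
  have hstep : ∀ r, r < k → u n x ≤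
      (∑ m ∈ Finset.range ((n - r) / k), u k (T^[m * k + r] x)) + 2 * ((k:ℝ) * K) := by
    intro r hr
    have hrn : r ≤ n := le_trans hr.le hn
    have h1 : u n x ≤ u (n - r) (T^[r] x) + u r x := by
      have := hsub (n - r) r x
      rwa [Nat.sub_add_cancel hrn] at this
    have h2 := eeld_chain_bound T u hsub k ((n - r) / k) ((n - r) % k) (T^[r] x)
    rw [Nat.div_add_mod'] at h2
    have e1 : ∀ m : ℕ, T^[m * k] (T^[r] x) = T^[m * k + r] x := fun m =>
      (Function.iterate_add_apply T (m*k) r x).symm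
    simp only [e1] at h2
    have hb1 : u ((n - r) % k) (T^[(n - r) / k * k + r] x) ≤ (k:ℝ) * K := by
      calc u ((n-r) % k) _ ≤ |u ((n-r) % k) _| := le_abs_self _
      _ ≤ ((n-r) % k : ℕ) * K := hK _ _
      _ ≤ (k:ℝ) * K := by
          apply mul_le_mul_of_nonneg_right _ hK0
          exact_mod_cast (Nat.mod_lt _ hkpos).le
    have hb2 : u r x ≤ (k:ℝ) * K := by
      calc u r x ≤ |u r x| := le_abs_self _
      _ ≤ (r:ℝ) * K := hK _ _
      _ ≤ (k:ℝ) * K := by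
          apply mul_le_mul_of_nonneg_right _ hK0
          exact_mod_cast hr.le
    calc u n x ≤ u (n - r) (T^[r] x) + u r x := h1
    _ ≤ ((∑ m ∈ Finset.range ((n - r)/k), u k (T^[m * k + r] x))
          + u ((n - r) % k) (T^[(n - r)/k * k + r] x)) + u r x := by
        exact add_le_add h2 le_rfl
    _ ≤ (∑ m ∈ Finset.range ((n - r)/k), u k (T^[m * k + r] x)) + 2 * ((k:ℝ) * K) := by
        have := add_le_add hb1 hb2
        linarith
  have hsum : (k : ℝ) * u n x ≤
      (∑ r ∈ Finset.range k, ∑ m ∈ Finset.range ((n - r) / k), u k (T^[m * k + r] x))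
        + (k:ℝ) * (2 * ((k:ℝ) * K)) := by
    have h := Finset.sum_le_sum (fun r hr => hstep r (Finset.mem_range.1 hr))
    simp only [Finset.sum_add_distrib, Finset.sum_const, Finset.card_range, nsmul_eq_mul] at h
    exact h
  rw [eeld_double_sum_eq T u k n hk hn x] at hsum
  have hcomp : (∑ j ∈ Finset.range (n - k + 1), u k (T^[j] x))
      ≤ (∑ j ∈ Finset.range n, u k (T^[j] x)) + (k:ℝ) * ((k:ℝ) * K) := by
    have hle : n - k + 1 ≤ n := by omega
    have hsplit : (∑ j ∈ Finset.range n, u k (T^[j] x))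
        = (∑ j ∈ Finset.range (n - k + 1), u k (T^[j] x))
          + ∑ j ∈ Finset.Ico (n - k + 1) n, u k (T^[j] x) := by
      rw [Finset.range_eq_Ico, Finset.range_eq_Ico]
      exact (Finset.sum_Ico_consecutive _ (Nat.zero_le _) hle).symm
    have hlow : (-(((k:ℝ)) * ((k:ℝ) * K))) ≤ ∑ j ∈ Finset.Ico (n - k + 1) n, u k (T^[j] x) := by
      have hcard : (Finset.Ico (n - k + 1) n).card = k - 1 := by
        rw [Nat.card_Ico]; omega
      have hterm : ∀ j ∈ Finset.Ico (n - k + 1) n, -((k:ℝ) * K) ≤ u k (T^[j] x) := by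
        intro j _
        have := hK k (T^[j] x)
        rw [abs_le] at this
        exact this.1
      calc (-(((k:ℝ)) * ((k:ℝ) * K))) ≤ ((k:ℝ) - 1) * (-((k:ℝ) * K)) := by
            nlinarith [(by exact_mod_cast hk : (1:ℝ) ≤ (k:ℝ))]
      _ = ((k - 1 : ℕ) : ℝ) * (-((k:ℝ) * K)) := by
          push_cast [Nat.cast_sub hk]
          ring
      _ ≤ ∑ j ∈ Finset.Ico (n - k + 1) n, u k (T^[j] x) := by
          rw [← hcard]
          have := Finset.card_nsmul_le_sum (Finset.Ico (n - k + 1) n)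
            (fun j => u k (T^[j] x)) (-((k:ℝ) * K)) hterm
          rwa [nsmul_eq_mul] at this
    linarith
  calc (k:ℝ) * u n x ≤ (∑ j ∈ Finset.range (n-k+1), u k (T^[j] x)) + (k:ℝ)*(2*((k:ℝ)*K)) := hsum
  _ ≤ (∑ j ∈ Finset.range n, u k (T^[j] x)) + (k:ℝ)*((k:ℝ)*K) + (k:ℝ)*(2*((k:ℝ)*K)) := by
      linarith
  _ = (∑ j ∈ Finset.range n, u k (T^[j] x)) + 3 * (k:ℝ)^2 * K := by ring

variable [TopologicalSpace X] [MeasurableSpace X]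

lemma eeld_subadditive_ld (μ : Measure X) [IsProbabilityMeasure μ]
    (hbirk : ∀ f : X → ℝ, Continuous f → ∀ ε' > (0:ℝ), ∃ C > (0:ℝ), ∀ n : ℕ,
      μ {x | (n : ℝ) * ε' ≤ |(∑ j ∈ Finset.range n, f (T^[j] x)) - n * ∫ y, f y ∂μ|}
        ≤ ENNReal.ofReal (C * Real.exp (-(n:ℝ) / C)))
    (hcont : ∀ n, Continuous (u n))
    (hsub : ∀ m n x, u (m + n) x ≤ u m (T^[n] x) + u n x)
    (K : ℝ) (hK0 : 0 ≤ K) (hK : ∀ n x, |u n x| ≤ n * K)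
    (l : ℝ) (hl : Tendsto (fun k : ℕ => (∫ x, u k x ∂μ) / k) atTop (nhds l))
    (δ : ℝ) (hδ : 0 < δ) :
    ∃ C > (0:ℝ), ∀ n : ℕ, μ {x | (n : ℝ) * (l + δ) ≤ u n x}
      ≤ ENNReal.ofReal (C * Real.exp (-(n:ℝ) / C)) := by
  obtain ⟨k, hkint, hk1⟩ :=
    ((hl.eventually (eventually_le_nhds (by linarith : l < l + δ/4))).and
      (eventually_ge_atTop 1)).exists
  have hkpos : (0:ℝ) < k := by exact_mod_cast hk1
  set I := ∫ x, u k x ∂μ with hI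
  have hIle : I ≤ (k:ℝ) * (l + δ/4) := by
    rw [div_le_iff₀ hkpos] at hkint
    linarith [hkint]
  obtain ⟨C₀, hC₀pos, hC₀⟩ := hbirk (u k) (hcont k) ((k:ℝ) * δ / 4) (by positivity)
  set N₀ : ℕ := max k (Nat.ceil (12 * (k:ℝ) * K / δ)) with hN₀
  set C : ℝ := max C₀ ((N₀:ℝ) + 3) with hC
  have hCpos : 0 < C := lt_of_lt_of_le hC₀pos (le_max_left _ _)
  refine ⟨C, hCpos, fun n => ?_⟩
  by_cases hn : n < N₀
  · have h1 : (1:ℝ) ≤ C * Real.exp (-(n:ℝ)/C) := by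
      have hNC : (N₀:ℝ) + 3 ≤ C := le_max_right _ _
      have hnC : (n:ℝ)/C ≤ 1 := by
        rw [div_le_one hCpos]
        have : (n:ℝ) ≤ N₀ := by exact_mod_cast hn.le
        linarith
      have hexp : Real.exp (-1) ≤ Real.exp (-(n:ℝ)/C) := by
        apply Real.exp_le_exp.2
        rw [neg_div]
        linarith
      have hexp1 : (1:ℝ)/3 ≤ Real.exp (-1) := by
        rw [Real.exp_neg]
        rw [div_le_iff₀ (by norm_num : (0:ℝ) < 3)]
        rw [inv_mul_eq_div, le_div_iff₀ (Real.exp_pos _)]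
        rw [one_mul]
        calc Real.exp 1 ≤ 2.7182818286 := Real.exp_one_lt_d9.le
        _ ≤ 3 := by norm_num
      have hC3 : (3:ℝ) ≤ C := by
        have : (0:ℝ) ≤ (N₀:ℝ) := Nat.cast_nonneg _
        linarith
      calc (1:ℝ) = 3 * (1/3) := by norm_num
      _ ≤ C * Real.exp (-(n:ℝ)/C) := by
          apply mul_le_mul hC3 (le_trans hexp1 hexp) (by norm_num) hCpos.le
    calc μ _ ≤ 1 := prob_le_one
    _ = ENNReal.ofReal 1 := ENNReal.ofReal_one.symm
    _ ≤ ENNReal.ofReal (C * Real.exp (-(n:ℝ)/C)) := ENNReal.ofReal_le_ofReal h1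
  · push_neg at hn
    have hkn : k ≤ n := le_trans (le_max_left _ _) hn
    have hceil : (12 * (k:ℝ) * K / δ) ≤ n := by
      have h1 : Nat.ceil (12 * (k:ℝ) * K / δ) ≤ n := le_trans (le_max_right _ _) hn
      exact le_trans (Nat.le_ceil _) (by exact_mod_cast h1)
    have hbdy : 3 * (k:ℝ)^2 * K ≤ (n:ℝ) * ((k:ℝ) * δ / 4) := by
      rw [div_le_iff₀ hδ] at hceil
      nlinarith [hkpos, hδ, hK0, Nat.cast_nonneg (α := ℝ) n]
    have hincl : {x | (n : ℝ) * (l + δ) ≤ u n x} ⊆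
        {x | (n : ℝ) * ((k:ℝ) * δ / 4) ≤ |(∑ j ∈ Finset.range n, u k (T^[j] x)) - n * I|} := by
      intro x hx
      simp only [Set.mem_setOf_eq] at hx ⊢
      have hmd := eeld_main_decomp T u hsub hK0 hK hk1 hkn x
      have hsum_lb : (∑ j ∈ Finset.range n, u k (T^[j] x))
          ≥ (k:ℝ) * ((n:ℝ) * (l + δ)) - 3 * (k:ℝ)^2 * K := by
        have : (k:ℝ) * ((n:ℝ) * (l + δ)) ≤ (k:ℝ) * u n x :=
          mul_le_mul_of_nonneg_left hx hkpos.le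
        linarith
      have hdiff : (n : ℝ) * ((k:ℝ) * δ / 4)
          ≤ (∑ j ∈ Finset.range n, u k (T^[j] x)) - n * I := by
        have hnI : (n:ℝ) * I ≤ (n:ℝ) * ((k:ℝ) * (l + δ/4)) :=
          mul_le_mul_of_nonneg_left hIle (Nat.cast_nonneg n)
        nlinarith [hbdy, hsum_lb, hnI, hkpos, hδ, Nat.cast_nonneg (α := ℝ) n]
      exact le_trans hdiff (le_abs_self _)
    calc μ _ ≤ μ _ := measure_mono hincl
    _ ≤ ENNReal.ofReal (C₀ * Real.exp (-(n:ℝ)/C₀)) := hC₀ n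
    _ ≤ ENNReal.ofReal (C * Real.exp (-(n:ℝ)/C)) :=
        ENNReal.ofReal_le_ofReal (eeld_exp_bound_mono hC₀pos (le_max_left _ _) n)

end Subadditive

section Integral

lemma eeld_tendsto_integral {X : Type*} [TopologicalSpace X] [MeasurableSpace X]
    [OpensMeasurableSpace X] (μ : Measure X) [IsProbabilityMeasure μ]
    (u : ℕ → X → ℝ) (hcont : ∀ n, Continuous (u n))
    {K : ℝ} (hK : ∀ n x, |u n x| ≤ n * K)
    (l : ℝ) (hae : ∀ᵐ x ∂μ, Tendsto (fun n : ℕ => u n x / n) atTop (nhds l)) :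
    Tendsto (fun n : ℕ => (∫ x, u n x ∂μ) / n) atTop (nhds l) := by
  have heq : ∀ n : ℕ, (∫ x, u n x ∂μ) / (n:ℝ) = ∫ x, u n x / (n:ℝ) ∂μ := fun n =>
    (integral_div _ _).symm
  simp only [heq]
  have hmeas : ∀ n : ℕ, AEStronglyMeasurable (fun x => u n x / (n:ℝ)) μ := fun n =>
    ((hcont n).div_const _).aestronglyMeasurable
  have hbound : ∀ n : ℕ, ∀ᵐ x ∂μ, ‖u n x / (n:ℝ)‖ ≤ |K| := by
    intro n
    refine Filter.Eventually.of_forall fun x => ?_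
    rcases Nat.eq_zero_or_pos n with h0 | hpos
    · subst h0
      simp
    · have hnpos : (0:ℝ) < n := by exact_mod_cast hpos
      rw [Real.norm_eq_abs, abs_div, abs_of_pos hnpos, div_le_iff₀ hnpos]
      calc |u n x| ≤ (n:ℝ) * K := hK n x
      _ ≤ (n:ℝ) * |K| := by
          apply mul_le_mul_of_nonneg_left (le_abs_self K) hnpos.le
      _ = |K| * (n:ℝ) := mul_comm _ _
  have := MeasureTheory.tendsto_integral_of_dominated_convergence (fun _ => |K|)
    hmeas (integrable_const _) hbound hae
  simpa using this

end Integral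

/-- a continuous cocycle all of whose Lyapunov exponents equal `λ` has
exponential large deviations for all exponents, assuming Birkhoff sums of continuous
functions have exponential large deviations. -/
theorem equal_exponents_large_deviations
    {X : Type*} [MetricSpace X] [CompactSpace X] [MeasurableSpace X] [BorelSpace X]
    (T : X → X) (hTcont : Continuous T)
    (μ : Measure X) [IsProbabilityMeasure μ] (hErg : Ergodic T μ)
    (hbirk : ∀ f : X → ℝ, Continuous f → ∀ ε' > (0 : ℝ), ∃ C > (0 : ℝ), ∀ n : ℕ,
      μ {x | (n : ℝ) * ε' ≤ |(∑ j ∈ Finset.range n, f (T^[j] x)) - n * ∫ y, f y ∂μ|}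
        ≤ ENNReal.ofReal (C * Real.exp (-(n : ℝ) / C)))
    {d : ℕ} (M : X → GL (Fin d) ℝ)
    (hMcont : Continuous fun x => (M x : Matrix (Fin d) (Fin d) ℝ))
    (lam : ℝ)
    (hae : ∀ᵐ x ∂μ,
      Tendsto (fun n : ℕ => Real.log (opNorm
          (cocycle T (fun y => (M y : Matrix (Fin d) (Fin d) ℝ)) n x)) / n) atTop (nhds lam) ∧
      Tendsto (fun n : ℕ => Real.log (opNorm
          (cocycle T (fun y => (M y : Matrix (Fin d) (Fin d) ℝ)) n x)⁻¹) / n) atTop (nhds (-lam))) :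
    ∀ i : ℕ, 1 ≤ i → i ≤ d → ∀ ε > (0 : ℝ), ∃ C > (0 : ℝ), ∀ n : ℕ,
      μ {x | (n : ℝ) * ε ≤
          |Real.log (matExtNorm i (cocycle T (fun y => (M y : Matrix (Fin d) (Fin d) ℝ)) n x)) -
            n * (i * lam)|}
        ≤ ENNReal.ofReal (C * Real.exp (-(n : ℝ) / C)) := by
  intro i hi1 hid ε hε
  have hd : 1 ≤ d := le_trans hi1 hid
  have hX : Nonempty X := MeasureTheory.Measure.nonempty_of_neZero μ
  set N : X → Matrix (Fin d) (Fin d) ℝ := fun y => (M y : Matrix (Fin d) (Fin d) ℝ) with hN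
  have hMu : ∀ x, IsUnit (N x) := fun x => ⟨M x, rfl⟩
  have hMu' : ∀ x, IsUnit (N x)⁻¹ := fun x => by
    rw [Matrix.isUnit_nonsing_inv_iff]; exact hMu x
  -- the two subadditive sequences
  set f : ℕ → X → ℝ := fun n x => Real.log (opNorm (cocycle T N n x)) with hf
  set g : ℕ → X → ℝ := fun n x => Real.log (opNorm (cocycle T N n x)⁻¹) with hg
  have hfzero : ∀ x, f 0 x = 0 := by
    intro x
    show Real.log (opNorm (cocycle T N 0 x)) = 0
    show Real.log (opNorm (1 : Matrix (Fin d) (Fin d) ℝ)) = 0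
    rw [eeld_opNorm_one hd, Real.log_one]
  have hgzero : ∀ x, g 0 x = 0 := by
    intro x
    show Real.log (opNorm (cocycle T N 0 x)⁻¹) = 0
    show Real.log (opNorm ((1 : Matrix (Fin d) (Fin d) ℝ))⁻¹) = 0
    rw [inv_one, eeld_opNorm_one hd, Real.log_one]
  have hfsub : ∀ m n x, f (m + n) x ≤ f m (T^[n] x) + f n x := fun m n x =>
    eeld_fseq_sub T N hd hMu m n x
  have hgsub : ∀ m n x, g (m + n) x ≤ g m (T^[n] x) + g n x := fun m n x =>
    eeld_gseq_sub T N hd hMu m n x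
  -- the uniform bound K
  have hφcont : Continuous fun x => max (Real.log (opNorm (N x))) (Real.log (opNorm (N x)⁻¹)) := by
    have hc1 : Continuous fun x => opNorm (N x) := eeld_continuous_opNorm.comp hMcont
    have hc2 : Continuous fun x => opNorm (N x)⁻¹ := by
      have : Continuous fun x => (N x)⁻¹ := by
        have hh : (fun x => (N x)⁻¹) = fun x => ((N x).det)⁻¹ • (N x).adjugate := by
          funext x
          rw [Matrix.inv_def, Ring.inverse_eq_inv]
        rw [hh]
        exact ((hMcont.matrix_det).inv₀ fun x =>
          ((Matrix.isUnit_iff_isUnit_det _).1 (hMu x)).ne_zero).smul hMcont.matrix_adjugate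
      exact eeld_continuous_opNorm.comp this
    exact ((hc1.log fun x => (eeld_opNorm_pos _ (hMu x) hd).ne').max
      (hc2.log fun x => (eeld_opNorm_pos _ (hMu' x) hd).ne'))
  obtain ⟨z, -, hz⟩ := isCompact_univ.exists_isMaxOn univ_nonempty hφcont.continuousOn
  set K : ℝ := max (max (Real.log (opNorm (N z))) (Real.log (opNorm (N z)⁻¹))) 0 with hK
  have hK0 : 0 ≤ K := le_max_right _ _
  have hφK : ∀ x, Real.log (opNorm (N x)) ≤ K ∧ Real.log (opNorm (N x)⁻¹) ≤ K := by
    intro x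
    have := hz (Set.mem_univ x)
    constructor
    · exact le_trans (le_trans (le_max_left _ _) this) (le_max_left _ _)
    · exact le_trans (le_trans (le_max_right _ _) this) (le_max_left _ _)
  -- upper bounds for f and g
  have hfup : ∀ n x, f n x ≤ n * K := by
    apply eeld_upper_bound T f
    · intro n x
      have h := hfsub n 1 x
      rwa [Function.iterate_one] at h
    · exact hfzero
    · intro x
      show Real.log (opNorm (cocycle T N 1 x)) ≤ K
      rw [eeld_cocycle_one]
      exact (hφK x).1
  have hgup : ∀ n x, g n x ≤ n * K := by
    apply eeld_upper_bound T g
    · intro n x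
      have h := hgsub n 1 x
      rwa [Function.iterate_one] at h
    · exact hgzero
    · intro x
      show Real.log (opNorm (cocycle T N 1 x)⁻¹) ≤ K
      rw [eeld_cocycle_one]
      exact (hφK x).2
  have hfabs : ∀ n x, |f n x| ≤ n * K := by
    intro n x
    rw [abs_le]
    refine ⟨?_, hfup n x⟩
    have h1 := eeld_fg_nonneg T N hd hMu n x
    have h2 := hgup n x
    show -((n:ℝ) * K) ≤ Real.log (opNorm (cocycle T N n x))
    have : Real.log (opNorm (cocycle T N n x)⁻¹) ≤ (n:ℝ) * K := h2
    linarith [h1]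
  have hgabs : ∀ n x, |g n x| ≤ n * K := by
    intro n x
    rw [abs_le]
    refine ⟨?_, hgup n x⟩
    have h1 := eeld_fg_nonneg T N hd hMu n x
    have h2 := hfup n x
    show -((n:ℝ) * K) ≤ Real.log (opNorm (cocycle T N n x)⁻¹)
    have : Real.log (opNorm (cocycle T N n x)) ≤ (n:ℝ) * K := h2
    linarith [h1]
  -- continuity
  have hfcont : ∀ n, Continuous (f n) := by
    intro n
    have hc := eeld_continuous_opNorm.comp (eeld_cocycle_continuous T N hTcont hMcont n)
    exact hc.log fun x =>
      (eeld_opNorm_pos _ (eeld_cocycle_isUnit T N hMu n x) hd).ne'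
  have hgcont : ∀ n, Continuous (g n) := by
    intro n
    have hc := eeld_continuous_opNorm.comp (eeld_cocycle_inv_continuous T N hTcont hMcont hMu n)
    exact hc.log fun x => by
      have : IsUnit (cocycle T N n x)⁻¹ := by
        rw [Matrix.isUnit_nonsing_inv_iff]; exact eeld_cocycle_isUnit T N hMu n x
      exact (eeld_opNorm_pos _ this hd).ne'
  -- integral convergence
  have hfl : Tendsto (fun n : ℕ => (∫ x, f n x ∂μ) / n) atTop (nhds lam) :=
    eeld_tendsto_integral μ f hfcont hfabs lam (hae.mono fun x hx => hx.1)
  have hgl : Tendsto (fun n : ℕ => (∫ x, g n x ∂μ) / n) atTop (nhds (-lam)) :=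
    eeld_tendsto_integral μ g hgcont hgabs (-lam) (hae.mono fun x hx => hx.2)
  -- apply the subadditive large deviations
  have hipos : (0:ℝ) < i := by exact_mod_cast hi1
  have hδ : 0 < ε / i := div_pos hε hipos
  obtain ⟨Cf, hCfpos, hCf⟩ := eeld_subadditive_ld T f μ hbirk hfcont hfsub K hK0 hfabs lam hfl
    (ε / i) hδ
  obtain ⟨Cg, hCgpos, hCg⟩ := eeld_subadditive_ld T g μ hbirk hgcont hgsub K hK0 hgabs (-lam) hgl
    (ε / i) hδ
  refine ⟨Cf + Cg, by linarith, fun n => ?_⟩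
  -- inclusion of events
  have hincl : {x | (n : ℝ) * ε ≤
      |Real.log (matExtNorm i (cocycle T N n x)) - n * (i * lam)|}
      ⊆ {x | (n : ℝ) * (lam + ε / i) ≤ f n x} ∪ {x | (n : ℝ) * (-lam + ε / i) ≤ g n x} := by
    intro x hx
    simp only [Set.mem_setOf_eq, Set.mem_union] at hx ⊢
    obtain ⟨hlog1, hlog2⟩ := eeld_log_matExtNorm_bounds hi1 hid (cocycle T N n x)
      (eeld_cocycle_isUnit T N hMu n x)
    rcases le_abs.1 hx with h | h
    · left
      have h1 : (n:ℝ) * (i * lam) + (n:ℝ) * ε ≤ (i:ℝ) * f n x := by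
        have : Real.log (matExtNorm i (cocycle T N n x)) ≤ (i:ℝ) * f n x := hlog2
        linarith
      have h2 : (n:ℝ) * (lam + ε / i) * i ≤ f n x * i := by
        have he : (n:ℝ) * (lam + ε / i) * i = (n:ℝ) * (i * lam) + (n:ℝ) * ε := by
          field_simp
        rw [he]
        linarith
      exact le_of_mul_le_mul_right h2 hipos
    · right
      have h1 : (i:ℝ) * g n x ≥ (n:ℝ) * ε - (n:ℝ) * (i * lam) := by
        have : -(i:ℝ) * g n x ≤ Real.log (matExtNorm i (cocycle T N n x)) := hlog1
        linarith
      have h2 : (n:ℝ) * (-lam + ε / i) * i ≤ g n x * i := by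
        have he : (n:ℝ) * (-lam + ε / i) * i = (n:ℝ) * ε - (n:ℝ) * (i * lam) := by
          field_simp
          ring
        rw [he]
        linarith
      exact le_of_mul_le_mul_right h2 hipos
  calc μ _ ≤ μ ({x | (n : ℝ) * (lam + ε / i) ≤ f n x}
        ∪ {x | (n : ℝ) * (-lam + ε / i) ≤ g n x}) := measure_mono hincl
  _ ≤ μ {x | (n : ℝ) * (lam + ε / i) ≤ f n x} + μ {x | (n : ℝ) * (-lam + ε / i) ≤ g n x} :=
      measure_union_le _ _
  _ ≤ ENNReal.ofReal (Cf * Real.exp (-(n:ℝ)/Cf)) + ENNReal.ofReal (Cg * Real.exp (-(n:ℝ)/Cg)) :=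
      add_le_add (hCf n) (hCg n)
  _ ≤ ENNReal.ofReal ((Cf + Cg) * Real.exp (-(n:ℝ)/(Cf + Cg))) := by
      rw [← ENNReal.ofReal_add (by positivity) (by positivity)]
      apply ENNReal.ofReal_le_ofReal
      have h1 : Cf * Real.exp (-(n:ℝ)/Cf) ≤ Cf * Real.exp (-(n:ℝ)/(Cf + Cg)) := by
        apply mul_le_mul_of_nonneg_left _ hCfpos.le
        apply Real.exp_le_exp.2
        rw [neg_div, neg_div, neg_le_neg_iff]
        gcongr
        linarith
      have h2 : Cg * Real.exp (-(n:ℝ)/Cg) ≤ Cg * Real.exp (-(n:ℝ)/(Cf + Cg)) := by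
        apply mul_le_mul_of_nonneg_left _ hCgpos.le
        apply Real.exp_le_exp.2
        rw [neg_div, neg_div, neg_le_neg_iff]
        gcongr
        linarith
      calc Cf * Real.exp (-(n:ℝ)/Cf) + Cg * Real.exp (-(n:ℝ)/Cg)
          ≤ Cf * Real.exp (-(n:ℝ)/(Cf + Cg)) + Cg * Real.exp (-(n:ℝ)/(Cf + Cg)) :=
            add_le_add h1 h2
      _ = (Cf + Cg) * Real.exp (-(n:ℝ)/(Cf + Cg)) := by ring
end

section
/- Let A be a nonempty finite set, Σ ⊆ A^ℤ a nonempty closed shift-invariant subset with the (invertible) shift map T, and μ a T-invariant Borel probability measure on Σ such that the set of periodic points has measure zero: μ{x ∈ Σ : ∃ p ≥ 1, T^p x = x} = 0. Then for every δ > 0 and every m ≥ 1 there exists a set R ⊆ Σ which is a finite union of cylinder sets (equivalently, a clopen subset of Σ) such that R, TR, …, T^{m−1}R are pairwise disjoint and μ(⋃_{0 ≤ i < m} T^i R) ≥ 1 − δ. -/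
open MeasureTheory Filter Real Set

section RokAux
set_option linter.unusedSectionVars false
set_option maxHeartbeats 1000000

variable {A : Type*} [Fintype A] [Nonempty A] [TopologicalSpace A] [DiscreteTopology A]
variable {S : Set (ℤ → A)}

/-- encode the length-`L` window of `x` at position `p` as a natural number -/
noncomputable def rc (L : ℕ) (x : ↥S) (p : ℤ) : ℕ :=
  haveI := Classical.decEq A
  ((Fintype.equivFin (Fin L → A)) (fun t => x.1 (p + (t : ℕ)))).val

/-- `p` is a marker position for `x` -/
def Mk (L M : ℕ) (x : ↥S) (p : ℤ) : Prop :=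
  ∀ k : ℤ, 1 ≤ k → k ≤ (M : ℤ) →
    rc L x p ≤ rc L x (p + k) ∧ rc L x p < rc L x (p - k)

lemma rc_inj {L : ℕ} {x y : ↥S} {p q : ℤ} (h : rc L x p = rc L y q) :
    ∀ s : ℕ, s < L → x.1 (p + s) = y.1 (q + s) := by
  classical
  intro s hs
  unfold rc at h
  have h2 := Fin.val_injective h
  have h3 := (Fintype.equivFin (Fin L → A)).injective h2
  exact congrFun h3 ⟨s, hs⟩

lemma rc_congr {L : ℕ} {x y : ↥S} {p : ℤ}
    (h : ∀ n : ℤ, p ≤ n → n < p + L → x.1 n = y.1 n) : rc L x p = rc L y p := by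
  classical
  unfold rc
  exact congrArg (fun w => ((Fintype.equivFin (Fin L → A)) w).val)
    (funext fun t => h (p + (t : ℕ)) (by omega) (by have := t.2; omega))

lemma Mk_spacing {L M : ℕ} {x : ↥S} {p k : ℤ} (h1 : 1 ≤ k) (h2 : k ≤ (M : ℤ))
    (hp : Mk L M x p) (hq : Mk L M x (p + k)) : False := by
  have a := (hp k h1 h2).1
  have b := (hq k h1 h2).2
  have e : p + k - k = p := by ring
  rw [e] at b
  omega

lemma Mk_congr {L M : ℕ} {x y : ↥S} {p : ℤ}
    (h : ∀ n : ℤ, p - M ≤ n → n < p + M + L → x.1 n = y.1 n) :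
    Mk L M x p ↔ Mk L M y p := by
  have hrc : ∀ q : ℤ, p - M ≤ q → q + L ≤ p + M + L → rc L x q = rc L y q := by
    intro q h1 h2
    exact rc_congr (fun n hn1 hn2 => h n (by omega) (by omega))
  constructor
  · intro hmk k hk1 hk2
    rw [← hrc p (by omega) (by omega), ← hrc (p + k) (by omega) (by omega),
      ← hrc (p - k) (by omega) (by omega)]
    exact hmk k hk1 hk2
  · intro hmk k hk1 hk2
    rw [hrc p (by omega) (by omega), hrc (p + k) (by omega) (by omega),
      hrc (p - k) (by omega) (by omega)]
    exact hmk k hk1 hk2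

variable (T : ↥S → ↥S)

lemma iter_coord (hT : ∀ (x : ↥S) (n : ℤ), (T x).1 n = x.1 (n + 1)) :
    ∀ (u : ℕ) (x : ↥S) (n : ℤ), (T^[u] x).1 n = x.1 (n + u) := by
  intro u
  induction u with
  | zero => intro x n; simp
  | succ u ih =>
    intro x n
    rw [Function.iterate_succ_apply, ih (T x) n, hT x (n + u)]
    congr 1
    push_cast
    ring

lemma rc_shift (hT : ∀ (x : ↥S) (n : ℤ), (T x).1 n = x.1 (n + 1))
    (L : ℕ) (u : ℕ) (x : ↥S) (p : ℤ) : rc L (T^[u] x) p = rc L x (p + u) := by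
  classical
  unfold rc
  refine congrArg (fun w => ((Fintype.equivFin (Fin L → A)) w).val) (funext fun t => ?_)
  rw [iter_coord T hT u x (p + (t : ℕ))]
  exact congrArg x.1 (by ring)

lemma Mk_shift (hT : ∀ (x : ↥S) (n : ℤ), (T x).1 n = x.1 (n + 1))
    (L M : ℕ) (u : ℕ) (x : ↥S) (p : ℤ) : Mk L M (T^[u] x) p ↔ Mk L M x (p + u) := by
  unfold Mk
  constructor
  · intro h k h1 h2
    have hh := h k h1 h2
    rw [rc_shift T hT, rc_shift T hT, rc_shift T hT] at hh
    have e1 : p + k + (u : ℤ) = p + (u : ℤ) + k := by ring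
    have e2 : p - k + (u : ℤ) = p + (u : ℤ) - k := by ring
    rw [e1, e2] at hh
    exact hh
  · intro h k h1 h2
    have hh := h k h1 h2
    rw [rc_shift T hT, rc_shift T hT, rc_shift T hT]
    have e1 : p + k + (u : ℤ) = p + (u : ℤ) + k := by ring
    have e2 : p - k + (u : ℤ) = p + (u : ℤ) - k := by ring
    rw [e1, e2]
    exact hh

/-- a set determined by finitely many coordinates is clopen -/
lemma isClopen_window (P : ↥S → Prop) (a b : ℤ)
    (h : ∀ x y : ↥S, (∀ n : ℤ, a ≤ n → n ≤ b → x.1 n = y.1 n) → P x → P y) :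
    IsClopen {x : ↥S | P x} := by
  classical
  set W := Finset.Icc a b with hW
  set f : ↥S → (W → A) := fun x w => x.1 w.1 with hf
  have hfc : Continuous f := by
    apply continuous_pi
    intro w
    exact (continuous_apply (w : ℤ)).comp continuous_subtype_val
  have key : {x : ↥S | P x} = f ⁻¹' (f '' {x : ↥S | P x}) := by
    ext x
    constructor
    · intro hx; exact ⟨x, hx, rfl⟩
    · rintro ⟨x₀, hx₀, hfx⟩
      refine h x₀ x ?_ hx₀
      intro n h1 h2
      have hn : n ∈ W := by
        rw [hW, Finset.mem_Icc]; exact ⟨h1, h2⟩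
      exact congrFun hfx ⟨n, hn⟩
  rw [key]
  exact ⟨(isClosed_discrete _).preimage hfc, (isOpen_discrete _).preimage hfc⟩

omit T in
/-- If `x` has no markers at all, then it has a periodic left tail. -/
lemma exists_tail_of_no_marker (L M : ℕ) (hM : 1 ≤ M) (hL : 2 * M ≤ L)
    (x : ↥S) (h : ∀ p : ℤ, ¬ Mk L M x p) :
    ∃ g : ℕ, 1 ≤ g ∧ g ≤ M ∧ ∃ s : ℤ, ∀ t : ℤ, t ≤ s → x.1 t = x.1 (t + (g : ℤ)) := by
  classical
  set v : ℕ := sInf {n : ℕ | ∃ p : ℤ, rc L x p = n} with hv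
  have hvmem : v ∈ {n : ℕ | ∃ p : ℤ, rc L x p = n} :=
    Nat.sInf_mem ⟨rc L x 0, 0, rfl⟩
  have hvle : ∀ p : ℤ, v ≤ rc L x p := fun p => Nat.sInf_le ⟨p, rfl⟩
  have hstep : ∀ p : ℤ, rc L x p = v → ∃ q : ℤ, p - M ≤ q ∧ q < p ∧ rc L x q = v := by
    intro p hp
    have hnm := h p
    unfold Mk at hnm
    push_neg at hnm
    obtain ⟨k, hk1, hk2, hk3⟩ := hnm
    by_cases hc : rc L x p ≤ rc L x (p + k)
    · have h4 := hk3 hc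
      refine ⟨p - k, by omega, by omega, ?_⟩
      have := hvle (p - k)
      omega
    · exfalso
      have := hvle (p + k)
      omega
  obtain ⟨p₀, hp₀⟩ := hvmem
  set F : {p : ℤ // rc L x p = v} → {p : ℤ // rc L x p = v} :=
    fun pp => ⟨(hstep pp.1 pp.2).choose, (hstep pp.1 pp.2).choose_spec.2.2⟩ with hF
  set ch : ℕ → {p : ℤ // rc L x p = v} := fun i => F^[i] ⟨p₀, hp₀⟩ with hch
  have hchsucc : ∀ i : ℕ, (ch i).1 - M ≤ (ch (i+1)).1 ∧ (ch (i+1)).1 < (ch i).1 := by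
    intro i
    have e : ch (i+1) = F (ch i) := Function.iterate_succ_apply' F i _
    rw [e, hF]
    exact ⟨(hstep (ch i).1 (ch i).2).choose_spec.1, (hstep (ch i).1 (ch i).2).choose_spec.2.1⟩
  set w₀ : ℕ → A := fun s => x.1 ((ch 0).1 + s) with hw₀
  have win : ∀ i : ℕ, ∀ s : ℕ, s < L → x.1 ((ch i).1 + s) = w₀ s := by
    intro i s hs
    have : rc L x (ch i).1 = rc L x (ch 0).1 := by rw [(ch i).2, (ch 0).2]
    exact rc_inj this s hs
  set g : ℕ := ((ch 0).1 - (ch 1).1).toNat with hg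
  have hd1 : (ch 0).1 - M ≤ (ch 1).1 := (hchsucc 0).1
  have hd2 : (ch 1).1 < (ch 0).1 := (hchsucc 0).2
  have hg1 : 1 ≤ g := by omega
  have hgM : g ≤ M := by omega
  have hch1g : (ch 1).1 + (g : ℤ) = (ch 0).1 := by omega
  have hper : ∀ s : ℕ, s + g < L → w₀ s = w₀ (s + g) := by
    intro s hs
    have e2 : x.1 ((ch 1).1 + ((s + g : ℕ) : ℤ)) = w₀ (s + g) := win 1 (s + g) hs
    have e3 : (ch 1).1 + ((s + g : ℕ) : ℤ) = (ch 0).1 + (s : ℕ) := by push_cast; omega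
    rw [e3] at e2
    have e4 : x.1 ((ch 0).1 + (s : ℕ)) = w₀ s := win 0 s (by omega)
    rw [← e4]
    exact e2
  have hdec : ∀ i : ℕ, (ch i).1 ≤ (ch 0).1 - i := by
    intro i
    induction i with
    | zero => simp
    | succ i ih =>
      have := hchsucc i
      omega
  refine ⟨g, hg1, hgM, (ch 0).1, ?_⟩
  intro t ht
  have hex : ∃ i : ℕ, (ch i).1 ≤ t := by
    refine ⟨((ch 0).1 - t).toNat, ?_⟩
    have := hdec ((ch 0).1 - t).toNat
    omega
  obtain ⟨j, hjle, hjmin⟩ : ∃ j : ℕ, (ch j).1 ≤ t ∧ ∀ i < j, ¬ (ch i).1 ≤ t :=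
    ⟨Nat.find hex, Nat.find_spec hex, fun i hi => Nat.find_min hex hi⟩
  cases j with
  | zero =>
    have htceq : t = (ch 0).1 := le_antisymm ht hjle
    have e1 : x.1 ((ch 0).1 + ((0:ℕ) : ℤ)) = w₀ 0 := win 0 0 (by omega)
    have e2 : x.1 ((ch 0).1 + ((g:ℕ) : ℤ)) = w₀ g := win 0 g (by omega)
    have e3 := hper 0 (by omega)
    norm_num at e3 e1
    rw [htceq, e2]
    rw [e1, e3]
  | succ i =>
    have hnot : ¬ (ch i).1 ≤ t := hjmin i (by omega)
    have h1 : (ch (i+1)).1 ≤ t := hjle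
    have hstepbd := hchsucc i
    set s : ℕ := (t - (ch (i+1)).1).toNat with hs
    have hsM : (s : ℤ) = t - (ch (i+1)).1 := by omega
    have hsltM : s < M := by omega
    have e1 : x.1 ((ch (i+1)).1 + (s : ℤ)) = w₀ s := win (i+1) s (by omega)
    have e2 : x.1 ((ch (i+1)).1 + ((s + g : ℕ) : ℤ)) = w₀ (s + g) := win (i+1) (s + g) (by omega)
    have et : (ch (i+1)).1 + (s : ℤ) = t := by omega
    have etg : (ch (i+1)).1 + ((s + g : ℕ) : ℤ) = t + g := by push_cast; omega
    rw [et] at e1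
    rw [etg] at e2
    rw [e1, e2]
    exact hper s (by omega)

omit T in
lemma Mk_pos_eq {L M : ℕ} {x : ↥S} {p q : ℤ} (h : p = q) (hp : Mk L M x p) :
    Mk L M x q := h ▸ hp

/-- the base of the Rokhlin tower -/
def RokBase (L M N m : ℕ) : Set ↥S :=
  {x : ↥S | (∃ t : ℕ, t ≤ N ∧ m ∣ t ∧ Mk L M x (-(t : ℤ)) ∧
      ∀ u : ℕ, u < t → ¬ Mk L M x (-(u : ℤ))) ∧
    ∀ f : ℕ, 1 ≤ f → f < m → ¬ Mk L M x (f : ℤ)}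

omit T in
lemma isClopen_RokBase (L M N m : ℕ) : IsClopen (RokBase (S := S) L M N m) := by
  have he : RokBase (S := S) L M N m = {x : ↥S | x ∈ RokBase L M N m} := rfl
  rw [he]
  apply isClopen_window _ (-((N : ℤ) + M)) ((m : ℤ) + M + L)
  intro x y hagree hx
  have hMk : ∀ p : ℤ, -(N:ℤ) ≤ p → p ≤ (m:ℤ) → (Mk L M x p ↔ Mk L M y p) := by
    intro p h1 h2
    exact Mk_congr (fun n hn1 hn2 => hagree n (by omega) (by omega))
  obtain ⟨⟨t, ht1, ht2, ht3, ht4⟩, h5⟩ := hx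
  constructor
  · refine ⟨t, ht1, ht2, ?_, ?_⟩
    · exact (hMk (-(t:ℤ)) (by omega) (by omega)).mp ht3
    · intro u hu
      exact fun hy => ht4 u hu ((hMk (-(u:ℤ)) (by omega) (by omega)).mpr hy)
  · intro f hf1 hf2
    exact fun hy => h5 f hf1 hf2 ((hMk (f:ℤ) (by omega) (by omega)).mpr hy)

end RokAux

set_option maxHeartbeats 1000000

/-- a Rokhlin lemma with clopen base for subshifts whose periodic points
have measure zero. -/
theorem rokhlin_clopen_base
    {A : Type*} [Fintype A] [Nonempty A] [TopologicalSpace A] [DiscreteTopology A]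
    (S : Set (ℤ → A)) (hSne : S.Nonempty) (hSclosed : IsClosed S)
    (hSinv : (fun (x : ℤ → A) (n : ℤ) => x (n + 1)) '' S = S)
    (T : ↥S → ↥S) (hT : ∀ (x : ↥S) (n : ℤ), (T x).1 n = x.1 (n + 1))
    [MeasurableSpace ↥S] [BorelSpace ↥S]
    (μ : Measure ↥S) [IsProbabilityMeasure μ] (hinv : MeasurePreserving T μ μ)
    (hper : μ {x : ↥S | ∃ p : ℕ, 1 ≤ p ∧ T^[p] x = x} = 0) :
    ∀ δ > (0 : ℝ), ∀ m : ℕ, 1 ≤ m →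
      ∃ Rset : Set ↥S, IsClopen Rset ∧
        (∀ i j : ℕ, i < m → j < m → i ≠ j → Disjoint (T^[i] '' Rset) (T^[j] '' Rset)) ∧
        ENNReal.ofReal (1 - δ) ≤ μ (⋃ i ∈ Finset.range m, T^[i] '' Rset) := by
  classical
  intro δ hδ m hm
  set M : ℕ := m + ⌈(2 * (m:ℝ)) / δ⌉₊ with hMdef
  have hmM : m ≤ M := Nat.le_add_right _ _
  have hM1 : 1 ≤ M := le_trans hm hmM
  set L : ℕ := 2 * M with hLdef
  -- basic facts about T
  have hTinj : Function.Injective T := by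
    intro a b hab
    apply Subtype.ext; funext n
    have h1 : (T a).1 (n - 1) = (T b).1 (n - 1) := by rw [hab]
    rw [hT a (n-1), hT b (n-1)] at h1
    simpa using h1
  have hTsurj : Function.Surjective T := by
    intro y
    have hy : y.1 ∈ (fun (x : ℤ → A) (n : ℤ) => x (n + 1)) '' S := by
      rw [hSinv]; exact y.2
    obtain ⟨z, hzS, hz⟩ := hy
    refine ⟨⟨z, hzS⟩, Subtype.ext ?_⟩
    funext n
    rw [hT]
    exact congrFun hz n
  -- marker sets are clopen, hence measurable
  have hMkClopen : ∀ p : ℤ, IsClopen {x : ↥S | Mk L M x p} := by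
    intro p
    apply isClopen_window _ (p - M) (p + M + L)
    intro x y hagree hx
    exact (Mk_congr (fun n h1 h2 => hagree n h1 (by omega))).mp hx
  have hMkMeas : ∀ p : ℤ, MeasurableSet {x : ↥S | Mk L M x p} :=
    fun p => (hMkClopen p).isOpen.measurableSet
  set E : Set ↥S := {x : ↥S | Mk L M x 0} with hE
  have hEmeas : MeasurableSet E := hMkMeas 0
  have hpre : ∀ u : ℕ, (T^[u]) ⁻¹' E = {x : ↥S | Mk L M x (u : ℤ)} := by
    intro u
    ext x
    have := Mk_shift T hT L M u x 0
    simp only [hE, mem_preimage, mem_setOf_eq, zero_add] at this ⊢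
    exact this
  have hpremu : ∀ u : ℕ, μ {x : ↥S | Mk L M x (u : ℤ)} = μ E := by
    intro u
    rw [← hpre u]
    exact (hinv.iterate u).measure_preimage hEmeas.nullMeasurableSet
  -- μ E ≤ 1/(M+1)
  have hEcard : ((M + 1 : ℕ) : ENNReal) * μ E ≤ 1 := by
    have hEdisj : (↑(Finset.range (M+1)) : Set ℕ).PairwiseDisjoint
        (fun u : ℕ => (T^[u]) ⁻¹' E) := by
      intro u hu v hv huv
      simp only [Finset.coe_range, mem_Iio] at hu hv
      have key : ∀ a b : ℕ, a < b → b ≤ M →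
          Disjoint ((T^[a]) ⁻¹' E) ((T^[b]) ⁻¹' E) := by
        intro a b hab hbM
        rw [Set.disjoint_left]
        intro x hxa hxb
        rw [hpre a] at hxa
        rw [hpre b] at hxb
        refine Mk_spacing (L := L) (M := M) (x := x) (p := (a:ℤ)) (k := (b:ℤ) - a)
          (by omega) (by push_cast; omega) hxa ?_
        exact Mk_pos_eq (by ring) hxb
      rcases lt_or_gt_of_ne huv with h | h
      · exact key u v h (by omega)
      · exact (key v u h (by omega)).symm
    have hmeas : ∀ u ∈ Finset.range (M+1), MeasurableSet ((T^[u]) ⁻¹' E) :=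
      fun u _ => (hinv.iterate u).measurable hEmeas
    have hsum := measure_biUnion_finset (μ := μ) hEdisj hmeas
    have hval : ∀ u ∈ Finset.range (M+1), μ ((T^[u]) ⁻¹' E) = μ E := by
      intro u _
      exact (hinv.iterate u).measure_preimage hEmeas.nullMeasurableSet
    rw [Finset.sum_congr rfl hval, Finset.sum_const, Finset.card_range, nsmul_eq_mul] at hsum
    calc ((M + 1 : ℕ) : ENNReal) * μ E = μ (⋃ u ∈ Finset.range (M+1), (T^[u]) ⁻¹' E) := hsum.symm
    _ ≤ μ univ := measure_mono (subset_univ _)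
    _ = 1 := measure_univ
  -- Ev sets : periodic left tails
  set Ev : ℕ → ℤ → Set ↥S := fun g s => {x : ↥S | ∀ t : ℤ, t ≤ s → x.1 t = x.1 (t + (g:ℤ))}
    with hEvdef
  have hEvMeas : ∀ g s, MeasurableSet (Ev g s) := by
    intro g s
    have he : Ev g s = ⋂ (t : ℤ), {x : ↥S | t ≤ s → x.1 t = x.1 (t + (g:ℤ))} := by
      ext x; simp only [hEvdef, mem_setOf_eq, Set.mem_iInter]
    rw [he]
    refine MeasurableSet.iInter (fun t => ?_)
    by_cases hts : t ≤ s
    · simp only [hts, true_implies]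
      have hcl : IsClopen {x : ↥S | x.1 t = x.1 (t + (g:ℤ))} := by
        apply isClopen_window _ (min t (t + g)) (max t (t + g))
        intro x y hagree hx
        rw [← hagree t (by omega) (by omega), ← hagree (t + g) (by omega) (by omega)]
        exact hx
      exact hcl.isOpen.measurableSet
    · simp only [hts, false_implies, setOf_true]
      exact MeasurableSet.univ
  have hEvShift : ∀ (g : ℕ) (s : ℤ) (u : ℕ), (T^[u]) ⁻¹' (Ev g s) = Ev g (s + u) := by
    intro g s u
    ext x
    simp only [hEvdef, mem_preimage, mem_setOf_eq]
    constructor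
    · intro h t ht
      have hh := h (t - u) (by omega)
      rw [iter_coord T hT, iter_coord T hT] at hh
      have e1 : t - (u:ℤ) + u = t := by ring
      have e2 : t - (u:ℤ) + g + u = t + g := by ring
      rw [e1, e2] at hh
      exact hh
    · intro h t ht
      rw [iter_coord T hT, iter_coord T hT]
      have hh := h (t + u) (by omega)
      have e2 : t + (u:ℤ) + g = t + g + u := by ring
      rw [e2] at hh
      exact hh
  have hEvNull : ∀ g : ℕ, 1 ≤ g → ∀ s : ℤ, μ (Ev g s) = 0 := by
    intro g hg s
    have hmono : Antitone (fun u : ℕ => Ev g (s + u)) := by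
      intro u v huv x hx t ht
      exact hx t (le_trans ht (by push_cast; omega))
    have hconst : ∀ u : ℕ, μ (Ev g (s + u)) = μ (Ev g s) := by
      intro u
      rw [← hEvShift g s u]
      exact (hinv.iterate u).measure_preimage (hEvMeas g s).nullMeasurableSet
    have hlim := tendsto_measure_iInter_atTop (μ := μ)
      (fun u : ℕ => (hEvMeas g (s + u)).nullMeasurableSet) hmono ⟨0, measure_ne_top μ _⟩
    have hsub : (⋂ u : ℕ, Ev g (s + u)) ⊆ {x : ↥S | ∃ p : ℕ, 1 ≤ p ∧ T^[p] x = x} := by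
      intro x hx
      refine ⟨g, hg, ?_⟩
      apply Subtype.ext; funext n
      rw [iter_coord T hT]
      have hx' := Set.mem_iInter.1 hx (n - s).toNat
      exact (hx' n (by omega)).symm
    have h0 : μ (⋂ u : ℕ, Ev g (s + u)) = 0 := measure_mono_null hsub hper
    rw [h0] at hlim
    have hlim' : Tendsto (fun _ : ℕ => μ (Ev g s)) atTop (nhds (0:ENNReal)) := by
      have : (μ ∘ fun u : ℕ => Ev g (s + u)) = fun _ : ℕ => μ (Ev g s) := by
        funext u; exact hconst u
      rwa [this] at hlim
    exact tendsto_nhds_unique tendsto_const_nhds hlim'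
  -- Y sets : no markers in a left half-line
  set Ys : ℕ → Set ↥S := fun u => {x : ↥S | ∀ p : ℤ, p ≤ (u:ℤ) → ¬ Mk L M x p} with hYsdef
  have hYsMeas : ∀ u, MeasurableSet (Ys u) := by
    intro u
    have he : Ys u = ⋂ (p : ℤ), {x : ↥S | p ≤ (u:ℤ) → ¬ Mk L M x p} := by
      ext x; simp only [hYsdef, mem_setOf_eq, Set.mem_iInter]
    rw [he]
    refine MeasurableSet.iInter (fun p => ?_)
    by_cases hps : p ≤ (u:ℤ)
    · simp only [hps, true_implies]
      exact (hMkMeas p).compl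
    · simp only [hps, false_implies, setOf_true]
      exact MeasurableSet.univ
  have hYsShift : ∀ u : ℕ, (T^[u]) ⁻¹' (Ys 0) = Ys u := by
    intro u
    ext x
    simp only [hYsdef, mem_preimage, mem_setOf_eq, Nat.cast_zero]
    constructor
    · intro h q hq
      have := h (q - u) (by omega)
      rw [Mk_shift T hT] at this
      exact fun hc => this (Mk_pos_eq (by ring) hc)
    · intro h p hp
      rw [Mk_shift T hT]
      exact fun hc => h (p + u) (by omega) hc
  have hYanti : Antitone Ys := by
    intro u v huv x hx p hp
    exact hx p (le_trans hp (by exact_mod_cast huv))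
  have hYinfNull : μ (⋂ u : ℕ, Ys u) = 0 := by
    have hsub : (⋂ u : ℕ, Ys u) ⊆
        ⋃ (g : ℕ) (s : ℤ), (if 1 ≤ g ∧ g ≤ M then Ev g s else (∅ : Set ↥S)) := by
      intro x hx
      have hnomk : ∀ p : ℤ, ¬ Mk L M x p := by
        intro p
        have := Set.mem_iInter.1 hx p.toNat
        exact this p (by omega)
      obtain ⟨g, hg1, hgM, s, hs⟩ :=
        exists_tail_of_no_marker L M hM1 (by omega) x hnomk
      refine Set.mem_iUnion.2 ⟨g, Set.mem_iUnion.2 ⟨s, ?_⟩⟩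
      rw [if_pos ⟨hg1, hgM⟩]
      exact hs
    refine measure_mono_null hsub ?_
    refine measure_iUnion_null (fun g => measure_iUnion_null (fun s => ?_))
    split_ifs with hcond
    · exact hEvNull g hcond.1 s
    · exact measure_empty
  have hY0Null : μ (Ys 0) = 0 := by
    have hconst : ∀ u : ℕ, μ (Ys u) = μ (Ys 0) := by
      intro u
      rw [← hYsShift u]
      exact (hinv.iterate u).measure_preimage (hYsMeas 0).nullMeasurableSet
    have hlim := tendsto_measure_iInter_atTop (μ := μ)
      (fun u : ℕ => (hYsMeas u).nullMeasurableSet) hYanti ⟨0, measure_ne_top μ _⟩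
    rw [hYinfNull] at hlim
    have hlim' : Tendsto (fun _ : ℕ => μ (Ys 0)) atTop (nhds (0:ENNReal)) := by
      have : (μ ∘ Ys) = fun _ : ℕ => μ (Ys 0) := by
        funext u; exact hconst u
      rwa [this] at hlim
    exact tendsto_nhds_unique tendsto_const_nhds hlim'
  -- choose N with μ (Aset N) < δ/2
  set Aset : ℕ → Set ↥S := fun N => {x : ↥S | ∀ p : ℤ, -(N:ℤ) ≤ p → p ≤ 0 → ¬ Mk L M x p}
    with hAdef
  have hAMeas : ∀ N, MeasurableSet (Aset N) := by
    intro N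
    have he : Aset N = ⋂ (p : ℤ), {x : ↥S | -(N:ℤ) ≤ p → p ≤ 0 → ¬ Mk L M x p} := by
      ext x; simp only [hAdef, mem_setOf_eq, Set.mem_iInter]
    rw [he]
    refine MeasurableSet.iInter (fun p => ?_)
    by_cases h1 : -(N:ℤ) ≤ p
    · by_cases h2 : p ≤ 0
      · simp only [h1, h2, true_implies]
        exact (hMkMeas p).compl
      · simp only [h1, h2, true_implies, false_implies, setOf_true]
        exact MeasurableSet.univ
    · simp only [h1, false_implies, setOf_true]
      exact MeasurableSet.univ
  have hAanti : Antitone Aset := by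
    intro u v huv x hx p hp1 hp2
    refine hx p ?_ hp2
    have huv' : (u:ℤ) ≤ (v:ℤ) := by exact_mod_cast huv
    omega
  have hAiInter : (⋂ N : ℕ, Aset N) = Ys 0 := by
    ext x
    simp only [Set.mem_iInter, hAdef, hYsdef, mem_setOf_eq, Nat.cast_zero]
    constructor
    · intro h p hp
      exact h (-p).toNat p (by omega) hp
    · intro h N p hp1 hp2
      exact h p hp2
  obtain ⟨N, hN⟩ : ∃ N : ℕ, μ (Aset N) ≤ ENNReal.ofReal (δ/2) := by
    have hlim := tendsto_measure_iInter_atTop (μ := μ)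
      (fun N : ℕ => (hAMeas N).nullMeasurableSet) hAanti ⟨0, measure_ne_top μ _⟩
    rw [hAiInter, hY0Null] at hlim
    have hpos : (0:ENNReal) < ENNReal.ofReal (δ/2) := ENNReal.ofReal_pos.2 (by linarith)
    obtain ⟨N, hN⟩ := (hlim.eventually_lt_const hpos).exists
    exact ⟨N, le_of_lt hN⟩
  -- the tower base
  set R : Set ↥S := RokBase L M N m with hRdef
  have hRClopen : IsClopen R := isClopen_RokBase L M N m
  -- tower disjointness
  have hdisj : ∀ i j : ℕ, i < j → j < m → Disjoint (T^[i] '' R) (T^[j] '' R) := by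
    intro i j hij hjm
    rw [Set.disjoint_left]
    rintro x ⟨y, hyR, hy⟩ ⟨z, hzR, hz⟩
    set d : ℕ := j - i with hd
    have hd1 : 1 ≤ d := by omega
    have hdm : d < m := by omega
    have hyz : y = T^[d] z := by
      have e : T^[i] (T^[d] z) = T^[i] y := by
        rw [hy, ← hz, ← Function.iterate_add_apply]
        congr 1
        omega
      exact (Function.Injective.iterate hTinj i e).symm
    obtain ⟨⟨t, htN, htm, hmk, hmin⟩, hfwd⟩ := hzR
    obtain ⟨⟨t', ht'N, ht'm, hmk', hmin'⟩, _⟩ := hyR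
    have hMky : ∀ p : ℤ, Mk L M y p ↔ Mk L M z (p + d) := by
      intro p
      rw [hyz]
      exact Mk_shift T hT L M d z p
    have hcmp : t' = t + d := by
      rcases lt_trichotomy t' (t + d) with hlt | heq | hgt
      · exfalso
        have h1 : Mk L M z (-(t':ℤ) + d) := (hMky _).1 hmk'
        rcases lt_trichotomy ((-(t':ℤ)) + d) 0 with hc | hc | hc
        · have h2 : Mk L M z (-(((t' - d : ℕ)) : ℤ)) :=
            Mk_pos_eq (by push_cast; omega) h1
          exact hmin (t' - d) (by omega) h2
        · by_cases ht0 : t = 0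
          · have ht'd : t' = d := by omega
            have hle := Nat.le_of_dvd (by omega) ht'm
            omega
          · have h2 : Mk L M z (-((0:ℕ):ℤ)) := Mk_pos_eq (by omega) h1
            exact hmin 0 (by omega) h2
        · have h2 : Mk L M z (((d - t' : ℕ)) : ℤ) :=
            Mk_pos_eq (by push_cast; omega) h1
          exact hfwd (d - t') (by omega) (by omega) h2
      · exact heq
      · exfalso
        have h1 : Mk L M y (-(((t + d : ℕ)):ℤ)) := by
          rw [hMky]
          exact Mk_pos_eq (by push_cast; ring) hmk
        exact hmin' (t + d) (by omega) h1
    have hdvd : m ∣ d := by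
      have : m ∣ t' - t := Nat.dvd_sub ht'm htm
      rw [hcmp] at this
      simpa using this
    have := Nat.le_of_dvd (by omega) hdvd
    omega
  -- coverage
  have hcover : (univ : Set ↥S) ⊆ (⋃ i ∈ Finset.range m, T^[i] '' R) ∪
      (Aset N ∪ ⋃ f ∈ Finset.Ico 1 m, {x : ↥S | Mk L M x (f:ℤ)}) := by
    intro x _
    by_cases hxA : x ∈ Aset N
    · exact Or.inr (Or.inl hxA)
    by_cases hxB : ∃ f : ℕ, 1 ≤ f ∧ f < m ∧ Mk L M x (f:ℤ)
    · obtain ⟨f, hf1, hf2, hf3⟩ := hxB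
      refine Or.inr (Or.inr ?_)
      exact Set.mem_biUnion (Finset.mem_Ico.2 ⟨hf1, hf2⟩) hf3
    push_neg at hxB
    left
    simp only [hAdef, mem_setOf_eq] at hxA
    push_neg at hxA
    obtain ⟨p, hp1, hp2, hp3⟩ := hxA
    have hex : ∃ u : ℕ, Mk L M x (-(u:ℤ)) :=
      ⟨(-p).toNat, Mk_pos_eq (p := p) (by omega) hp3⟩
    set t₀ := Nat.find hex with ht₀def
    have ht₀mk : Mk L M x (-(t₀:ℤ)) := Nat.find_spec hex
    have ht₀min : ∀ u : ℕ, u < t₀ → ¬ Mk L M x (-(u:ℤ)) := fun u hu => Nat.find_min hex hu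
    have ht₀N : t₀ ≤ N := by
      refine le_trans (Nat.find_min' hex (m := (-p).toNat) (Mk_pos_eq (p := p) (by omega) hp3)) ?_
      omega
    set i := t₀ % m with hidef
    have him : i < m := Nat.mod_lt _ (by omega)
    have hit : i ≤ t₀ := Nat.mod_le _ _
    obtain ⟨y, hy⟩ := (hTsurj.iterate i) x
    have hMkx : ∀ q : ℤ, Mk L M x q ↔ Mk L M y (q + i) := by
      intro q
      rw [← hy]
      exact Mk_shift T hT L M i y q
    have hyR : y ∈ R := by
      refine ⟨⟨t₀ - i, by omega, ?_, ?_, ?_⟩, ?_⟩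
      · refine ⟨t₀ / m, ?_⟩
        have := Nat.mod_add_div t₀ m
        omega
      · have h1 : Mk L M y ((-(t₀:ℤ)) + i) := (hMkx _).1 ht₀mk
        exact Mk_pos_eq (by push_cast; omega) h1
      · intro u hu hMku
        have h1 : Mk L M x (-((u + i : ℕ):ℤ)) := by
          rw [hMkx]
          exact Mk_pos_eq (by push_cast; ring) hMku
        exact ht₀min (u + i) (by omega) h1
      · intro f hf1 hf2 hMkf
        have h1 : Mk L M x ((f:ℤ) - i) := by
          rw [hMkx]
          exact Mk_pos_eq (by push_cast; ring) hMkf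
        rcases lt_trichotomy ((f:ℤ) - i) 0 with hc | hc | hc
        · have h2 : Mk L M x (-(((i - f : ℕ)):ℤ)) := Mk_pos_eq (by push_cast; omega) h1
          exact ht₀min (i - f) (by omega) h2
        · have h2 : Mk L M x (-((0:ℕ):ℤ)) := Mk_pos_eq (by omega) h1
          have h3 : t₀ ≤ 0 := Nat.find_min' hex h2
          omega
        · have h2 : Mk L M x (((f - i : ℕ)):ℤ) := Mk_pos_eq (by push_cast; omega) h1
          exact hxB (f - i) (by omega) (by omega) h2
    refine Set.mem_biUnion (Finset.mem_range.2 him) ⟨y, hyR, hy⟩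
  -- measure bound for the forward-marker part
  have hBbound : μ (⋃ f ∈ Finset.Ico 1 m, {x : ↥S | Mk L M x (f:ℤ)}) ≤ ENNReal.ofReal (δ/2) := by
    have h1 : μ (⋃ f ∈ Finset.Ico 1 m, {x : ↥S | Mk L M x (f:ℤ)}) ≤
        ∑ f ∈ Finset.Ico 1 m, μ {x : ↥S | Mk L M x (f:ℤ)} :=
      measure_biUnion_finset_le _ _
    have h2 : ∑ f ∈ Finset.Ico 1 m, μ {x : ↥S | Mk L M x (f:ℤ)} = ((m - 1 : ℕ) : ENNReal) * μ E := by
      rw [Finset.sum_congr rfl (fun f _ => hpremu f), Finset.sum_const, Nat.card_Ico,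
        nsmul_eq_mul]
    have hEle : μ E ≤ (((M + 1 : ℕ) : ENNReal))⁻¹ :=
      ENNReal.le_inv_iff_mul_le.2 (by rw [mul_comm]; exact hEcard)
    have h3 : ((m - 1 : ℕ) : ENNReal) * μ E ≤ ((m - 1 : ℕ) : ENNReal) * (((M + 1 : ℕ) : ENNReal))⁻¹ :=
      mul_le_mul_right hEle _
    have h4 : ((m - 1 : ℕ) : ENNReal) * (((M + 1 : ℕ) : ENNReal))⁻¹ ≤ ENNReal.ofReal (δ/2) := by
      have e1 : ((m - 1 : ℕ) : ENNReal) * (((M + 1 : ℕ) : ENNReal))⁻¹ =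
          ENNReal.ofReal (((m - 1 : ℕ) : ℝ) * (((M + 1 : ℕ) : ℝ))⁻¹) := by
        rw [ENNReal.ofReal_mul (Nat.cast_nonneg _), ENNReal.ofReal_natCast,
          ENNReal.ofReal_inv_of_pos (by exact_mod_cast Nat.succ_pos M), ENNReal.ofReal_natCast]
      rw [e1]
      apply ENNReal.ofReal_le_ofReal
      rw [← div_eq_mul_inv, div_le_iff₀ (by positivity)]
      have hceil : 2 * (m:ℝ) / δ ≤ (M : ℝ) := by
        rw [hMdef]
        push_cast
        have := Nat.le_ceil (2 * (m:ℝ) / δ)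
        have hm0 : (0:ℝ) ≤ (m:ℝ) := by positivity
        linarith
      have hmr : ((m - 1 : ℕ) : ℝ) ≤ (m : ℝ) := by
        exact_mod_cast Nat.cast_le.2 (Nat.sub_le m 1)
      have hkey : (m : ℝ) ≤ δ/2 * (((M + 1 : ℕ) : ℝ)) := by
        have h5 : δ/2 * (2 * (m:ℝ) / δ) = m := by field_simp
        have h6 : δ/2 * (2 * (m:ℝ) / δ) ≤ δ/2 * ((M:ℝ) + 1) := by
          apply mul_le_mul_of_nonneg_left _ (by linarith)
          linarith
        push_cast
        linarith
      linarith
    calc μ (⋃ f ∈ Finset.Ico 1 m, {x : ↥S | Mk L M x (f:ℤ)}) ≤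
        ∑ f ∈ Finset.Ico 1 m, μ {x : ↥S | Mk L M x (f:ℤ)} := h1
    _ = ((m - 1 : ℕ) : ENNReal) * μ E := h2
    _ ≤ ENNReal.ofReal (δ/2) := le_trans h3 h4
  -- final assembly
  refine ⟨R, hRClopen, ?_, ?_⟩
  · intro i j him hjm hij
    rcases lt_or_gt_of_ne hij with h | h
    · exact hdisj i j h hjm
    · exact (hdisj j i h him).symm
  · have huniv : (1:ENNReal) ≤ μ (⋃ i ∈ Finset.range m, T^[i] '' R) + ENNReal.ofReal δ := by
      have hc1 : (1:ENNReal) = μ univ := measure_univ.symm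
      have hc2 := measure_mono (μ := μ) hcover
      have hc3 := measure_union_le (μ := μ) (⋃ i ∈ Finset.range m, T^[i] '' R)
        (Aset N ∪ ⋃ f ∈ Finset.Ico 1 m, {x : ↥S | Mk L M x (f:ℤ)})
      have hc4 := measure_union_le (μ := μ) (Aset N)
        (⋃ f ∈ Finset.Ico 1 m, {x : ↥S | Mk L M x (f:ℤ)})
      have hc5 : μ (Aset N) + μ (⋃ f ∈ Finset.Ico 1 m, {x : ↥S | Mk L M x (f:ℤ)}) ≤
          ENNReal.ofReal (δ/2) + ENNReal.ofReal (δ/2) := add_le_add hN hBbound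
      have hc6 : ENNReal.ofReal (δ/2) + ENNReal.ofReal (δ/2) = ENNReal.ofReal δ := by
        rw [← ENNReal.ofReal_add (by linarith) (by linarith)]
        congr 1
        ring
      calc (1:ENNReal) = μ univ := hc1
      _ ≤ μ ((⋃ i ∈ Finset.range m, T^[i] '' R) ∪
          (Aset N ∪ ⋃ f ∈ Finset.Ico 1 m, {x : ↥S | Mk L M x (f:ℤ)})) := hc2
      _ ≤ μ (⋃ i ∈ Finset.range m, T^[i] '' R) +
          μ (Aset N ∪ ⋃ f ∈ Finset.Ico 1 m, {x : ↥S | Mk L M x (f:ℤ)}) := hc3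
      _ ≤ μ (⋃ i ∈ Finset.range m, T^[i] '' R) +
          (μ (Aset N) + μ (⋃ f ∈ Finset.Ico 1 m, {x : ↥S | Mk L M x (f:ℤ)})) :=
        add_le_add_right hc4 _
      _ ≤ μ (⋃ i ∈ Finset.range m, T^[i] '' R) +
          (ENNReal.ofReal (δ/2) + ENNReal.ofReal (δ/2)) := add_le_add_right hc5 _
      _ = μ (⋃ i ∈ Finset.range m, T^[i] '' R) + ENNReal.ofReal δ := by rw [hc6]
    rw [ENNReal.ofReal_sub 1 (le_of_lt hδ), ENNReal.ofReal_one]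
    exact tsub_le_iff_right.2 huniv
end
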